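/- arXiv:0812.3684 — 3 statements merged into one kernel-verified Lean document; each statement's English description precedes it below -/
import Mathlib

section
/- With \(\chi\) as above, for \(n \ge 1\) and any root \(\alpha\) of \(\mathfrak{g}\), \(\chi(n\delta + \alpha) \ge 0\); and for \(n = -1\), \(\chi(-\delta + \alpha) \ge 0\) if and only if \(\chi(\delta - \theta) = 0\) and \(\chi(\alpha) = \chi(\theta)\). -/
/-!
Since `θ ± α` are nonnegative combinations of simple roots, `χ` is nonnegative on them, so
`|χ α| ≤ χ θ`. Writing `χ δ = χ (δ - θ) + χ θ` with `χ (δ - θ) ≥ 0`, for `n ≥ 1` we get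
`χ (n δ + α) ≥ χ (δ - θ) + (χ θ + χ α) ≥ 0`, while `χ (-δ + α) = -χ (δ - θ) - (χ θ - χ α)` is a sum
of two nonpositive terms, hence nonnegative exactly when both vanish.
-/

lemma AddMonoidHom.map_sum_nsmul_nonneg {V M ι : Type*} [AddCommMonoid V] [AddCommMonoid M]
    [PartialOrder M] [IsOrderedAddMonoid M] (f : V →+ M) {Δ : ι → V} (hΔ : ∀ i, 0 ≤ f (Δ i))
    (s : Finset ι) (c : ι → ℕ) : 0 ≤ f (∑ i ∈ s, c i • Δ i) := by
  rw [map_sum]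
  exact Finset.sum_nonneg fun i _ => by rw [map_nsmul]; exact nsmul_nonneg (hΔ i) _

section AffineRoots

variable {V : Type*} [AddCommGroup V] (χ : V →+ ℤ) {θ δ α : V}

lemma map_zsmul_add_nonneg (hδθ : 0 ≤ χ (δ - θ)) (hlo : -χ θ ≤ χ α) (hhi : χ α ≤ χ θ)
    {n : ℤ} (hn : 1 ≤ n) : 0 ≤ χ (n • δ + α) := by
  have hδ : χ δ = χ (δ - θ) + χ θ := by rw [map_sub]; ring
  have hδ_le : χ δ ≤ n * χ δ := le_mul_of_one_le_left (by omega) hn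
  rw [map_add, map_zsmul, smul_eq_mul]
  omega

lemma map_neg_add_nonneg_iff (hδθ : 0 ≤ χ (δ - θ)) (hhi : χ α ≤ χ θ) :
    0 ≤ χ ((-1 : ℤ) • δ + α) ↔ χ (δ - θ) = 0 ∧ χ α = χ θ := by
  have hδ : χ δ = χ (δ - θ) + χ θ := by rw [map_sub]; ring
  rw [map_add, map_zsmul, smul_eq_mul]
  omega

end AffineRoots

/-- With `χ` a `ℤ`-linear function on the affine root lattice taking values in
`{0,1}` on the affine simple roots `δ - θ, α₁, …, α_r`: for `n ≥ 1` and any root `α` of `𝔤`,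
`χ(n δ + α) ≥ 0`; and for `n = -1`, `χ(-δ + α) ≥ 0` iff `χ(δ - θ) = 0` and `χ(α) = χ(θ)`. -/
theorem stmt7 {V : Type*} [AddCommGroup V] {r : ℕ}
    (Δ : Fin r → V) (Φ : Set V) (θ δ : V)
    (χ : V →+ ℤ)
    (hχ0 : χ (δ - θ) = 0 ∨ χ (δ - θ) = 1)
    (hχ : ∀ i, χ (Δ i) = 0 ∨ χ (Δ i) = 1)
    -- `θ` is the highest root: `θ ± α` are nonnegative combinations of simple roots
    (hsub : ∀ α ∈ Φ, ∃ c : Fin r → ℕ, θ - α = ∑ i, c i • Δ i)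
    (hadd : ∀ α ∈ Φ, ∃ c : Fin r → ℕ, θ + α = ∑ i, c i • Δ i) :
    (∀ (n : ℤ), 1 ≤ n → ∀ α ∈ Φ, 0 ≤ χ (n • δ + α)) ∧
    (∀ α ∈ Φ, (0 ≤ χ ((-1 : ℤ) • δ + α) ↔ χ (δ - θ) = 0 ∧ χ α = χ θ)) := by
  have hΔ : ∀ i, 0 ≤ χ (Δ i) := fun i => by have := hχ i; omega
  have hδθ : 0 ≤ χ (δ - θ) := by omega
  have hhi : ∀ α ∈ Φ, χ α ≤ χ θ := fun α hα => by
    obtain ⟨c, hc⟩ := hsub α hα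
    have := χ.map_sum_nsmul_nonneg hΔ Finset.univ c
    rwa [← hc, map_sub, sub_nonneg] at this
  have hlo : ∀ α ∈ Φ, -χ θ ≤ χ α := fun α hα => by
    obtain ⟨c, hc⟩ := hadd α hα
    have := χ.map_sum_nsmul_nonneg hΔ Finset.univ c
    rw [← hc, map_add] at this
    omega
  exact ⟨fun n hn α hα => map_zsmul_add_nonneg χ hδθ (hlo α hα) (hhi α hα) hn,
    fun α hα => map_neg_add_nonneg_iff χ hδθ (hhi α hα)⟩
end

section
/- In the infinite-matrix model of \(L\mathfrak{gl}(n,\mathbb{C})\) (doubly-infinite matrices with \(M_{k,l}=M_{k+n,l+n}\)), the index-shift map \(\sigma(M)_{k,l} = M_{k+1,l+1}\) is a Lie algebra automorphism whose \(n\)-th power is induced by conjugation by \(z\) times a permutation, i.e. \(\sigma^n\) acts on loops as an inner automorphism; in particular \(\sigma\) generates a cyclic group of outer automorphisms of order dividing \(n\) on the quotient by inner automorphisms. -/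
/-- Product of doubly-infinite matrices (with finitely many nonzero diagonals the sum
is finite). -/
noncomputable def imul (A B : ℤ → ℤ → ℂ) : ℤ → ℤ → ℂ :=
  fun k l => ∑ᶠ m : ℤ, A k m * B m l

/-- Bracket of doubly-infinite matrices. -/
noncomputable def ibrack (A B : ℤ → ℤ → ℂ) : ℤ → ℤ → ℂ :=
  fun k l => imul A B k l - imul B A k l

/-- The index-shift map `σ(A)_{k,l} = A_{k+1,l+1}` on doubly-infinite matrices. -/
def shiftMat (A : ℤ → ℤ → ℂ) : ℤ → ℤ → ℂ := fun k l => A (k + 1) (l + 1)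

/-- The infinite-matrix model of `L𝔤𝔩(n,ℂ)`: doubly-infinite matrices with finitely many
nonzero diagonals, invariant under the shift `(k,l) ↦ (k+n, l+n)`. -/
def loopMatrixModel (n : ℕ) : Set (ℤ → ℤ → ℂ) :=
  {A | (∀ k l : ℤ, A (k + n) (l + n) = A k l) ∧
    {d : ℤ | ∃ k l : ℤ, k - l = d ∧ A k l ≠ 0}.Finite}

theorem imul_shiftMat (A B : ℤ → ℤ → ℂ) :
    imul (shiftMat A) (shiftMat B) = shiftMat (imul A B) := by
  funext k l
  exact finsum_comp (g := fun m => A (k + 1) m * B m (l + 1)) _ (Equiv.addRight (1 : ℤ)).bijective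

theorem shiftMat_ibrack (A B : ℤ → ℤ → ℂ) :
    shiftMat (ibrack A B) = ibrack (shiftMat A) (shiftMat B) := by
  funext k l
  simp only [ibrack, imul_shiftMat]
  rfl

theorem shiftMat_mem_loopMatrixModel {n : ℕ} {A : ℤ → ℤ → ℂ} (hA : A ∈ loopMatrixModel n) :
    shiftMat A ∈ loopMatrixModel n := by
  obtain ⟨hperiodic, hdiagonals⟩ := hA
  refine ⟨fun k l => ?_, hdiagonals.subset ?_⟩
  · simpa only [shiftMat, add_right_comm] using hperiodic (k + 1) (l + 1)
  · rintro d ⟨k, l, rfl, hkl⟩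
    exact ⟨k + 1, l + 1, by ring, hkl⟩

theorem shiftMat_iterate_apply (m : ℕ) (A : ℤ → ℤ → ℂ) (k l : ℤ) :
    shiftMat^[m] A k l = A (k + m) (l + m) := by
  induction m generalizing A with
  | zero => simp
  | succ m ih =>
    rw [Function.iterate_succ_apply, ih]
    simp only [shiftMat, Nat.cast_succ, add_assoc]

theorem shiftMat_iterate_eq_self {n : ℕ} {A : ℤ → ℤ → ℂ}
    (hA : ∀ k l : ℤ, A (k + n) (l + n) = A k l) : shiftMat^[n] A = A := by
  funext k l
  rw [shiftMat_iterate_apply, hA]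

theorem stmt16_general (n : ℕ) :
    (∀ A ∈ loopMatrixModel n, shiftMat A ∈ loopMatrixModel n) ∧
    (∀ A B : ℤ → ℤ → ℂ, shiftMat (ibrack A B) = ibrack (shiftMat A) (shiftMat B)) ∧
    (∀ A ∈ loopMatrixModel n, shiftMat^[n] A = A) :=
  ⟨fun _ hA => shiftMat_mem_loopMatrixModel hA, shiftMat_ibrack,
    fun _ hA => shiftMat_iterate_eq_self hA.1⟩

/-- In the infinite-matrix model of `L𝔤𝔩(n,ℂ)`, the index-shift map
`σ(A)_{k,l} = A_{k+1,l+1}` is a Lie algebra automorphism of the model, and its `n`-th power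
acts on loops as an inner automorphism — indeed `σⁿ` is the identity on the model (it is
induced by conjugation by `z` times a permutation matrix, which is central as an operation);
in particular `σ` generates a cyclic group of outer automorphisms of order dividing `n`. -/
theorem stmt16 (n : ℕ) (hn : 0 < n) :
    (∀ A ∈ loopMatrixModel n, shiftMat A ∈ loopMatrixModel n) ∧
    (∀ A B : ℤ → ℤ → ℂ, shiftMat (ibrack A B) = ibrack (shiftMat A) (shiftMat B)) ∧
    (∀ A ∈ loopMatrixModel n, shiftMat^[n] A = A) :=
  stmt16_general n
end

section
/- In the ADHM description of rank \(n\), charge \(k\) instanton bundles with \(A\) invertible: given matrices \((A,B,C,D)\) with \(A,B \in M_k(\mathbb{C})\), \(C \in M_{k\times n}(\mathbb{C})\) with columns \(C_1,\dots,C_n\), \(D \in M_{n\times k}(\mathbb{C})\) with rows \(D_1,\dots,D_n\), satisfying \([A,B] + CD = 0\) and \(A\) invertible, the transform \(\mathcal{H}(A,B,C,D) = (A,\ B - C_1 D_1 A^{-1},\ (C_2,\dots,C_n, AC_1),\ (D_2,\dots,D_n, D_1 A^{-1}))\) again satisfies the ADHM constraint, and \(\mathcal{H}^n(A,B,C,D)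 = (A, ABA^{-1}, AC, DA^{-1})\), which is the \(GL(k)\)-gauge transform of \((A,B,C,D)\) by \(g = A\). -/
open Matrix

/-- The ADHM data for framed rank-`n` holomorphic bundles on `ℙ¹ × ℙ¹` with `c₂ = k`:
a four-tuple `(A, B, C, D)` of matrices. -/
abbrev ADHMData (k n : ℕ) :=
  Matrix (Fin k) (Fin k) ℂ × Matrix (Fin k) (Fin k) ℂ ×
    Matrix (Fin k) (Fin n) ℂ × Matrix (Fin n) (Fin k) ℂ

/-- The Hecke transform on ADHM data (for `A` invertible):
`ℋ(A,B,C,D) = (A, B - C₁D₁A⁻¹, (C₂,…,C_n, AC₁), (D₂,…,D_n, D₁A⁻¹))`, where `Cᵢ` are the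
columns of `C` and `Dᵢ` the rows of `D`. -/
noncomputable def heckeADHM (k n : ℕ) [NeZero n] (X : ADHMData k n) : ADHMData k n :=
  let A := X.1
  let B := X.2.1
  let C := X.2.2.1
  let D := X.2.2.2
  let c1 : Fin k → ℂ := fun r => C r 0          -- first column of `C`
  let d1 : Fin k → ℂ := fun r => D 0 r          -- first row of `D`
  (A,
   B - Matrix.vecMulVec c1 d1 * A⁻¹,
   Matrix.of fun r s => if h : (s : ℕ) + 1 < n then C r ⟨(s : ℕ) + 1, h⟩ else A.mulVec c1 r,
   Matrix.of fun s r => if h : (s : ℕ) + 1 < n then D ⟨(s : ℕ) + 1, h⟩ r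
     else Matrix.vecMul d1 A⁻¹ r)

/-! The Hecke transform moves the first column–row pair `(C₁, D₁)` to the end as `(AC₁, D₁A⁻¹)`
and subtracts `C₁D₁A⁻¹` from `B`. Since `CD = ∑ᵢ CᵢDᵢ` does not see the order of the pairs, `CD`
changes by `A C₁D₁ A⁻¹ - C₁D₁`, which cancels the change of `[A, B]`. After `m ≤ n` steps the
data are `(A, B - (∑_{i<m} CᵢDᵢ) A⁻¹)` together with `(C, D)` whose first `m` pairs have been
replaced by `(ACᵢ, DᵢA⁻¹)`, rotated by `m`. At `m = n` the rotation is trivial, and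
`B - CDA⁻¹ = ABA⁻¹` is the ADHM equation. -/

namespace Matrix

section Reindex

variable {α ι κ m p : Type*} [DecidableEq ι] [DecidableEq κ]

theorem updateCol_submatrix_id (M : Matrix m ι α) (e : κ ≃ ι) (j : κ) (c : m → α) :
    (M.submatrix id e).updateCol j c = (M.updateCol (e j) c).submatrix id e :=
  updateCol_submatrix_equiv M j c (Equiv.refl _) e

theorem updateRow_submatrix_id (M : Matrix ι p α) (e : κ ≃ ι) (i : κ) (r : p → α) :
    (M.submatrix e id).updateRow i r = (M.updateRow (e i) r).submatrix e id :=
  updateRow_submatrix_equiv M i r e (Equiv.refl _)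

end Reindex

variable {R ι m p : Type*} [Fintype ι]

theorem mul_eq_sum_vecMulVec [NonUnitalNonAssocSemiring R] (C : Matrix m ι R)
    (D : Matrix ι p R) : C * D = ∑ i, vecMulVec (Cᵀ i) (D i) := by
  ext r r'
  simp [mul_apply, sum_apply, vecMulVec_apply]

theorem updateCol_mul_updateRow [NonUnitalNonAssocRing R] [DecidableEq ι] (C : Matrix m ι R)
    (D : Matrix ι p R) (j : ι) (c : m → R) (d : p → R) :
    C.updateCol j c * D.updateRow j d = C * D - vecMulVec (Cᵀ j) (D j) + vecMulVec c d := by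
  have hj : j ∈ (Finset.univ : Finset ι) := Finset.mem_univ j
  have hterm : ∀ i, vecMulVec ((C.updateCol j c)ᵀ i) (D.updateRow j d i) =
      Function.update (fun i => vecMulVec (Cᵀ i) (D i)) j (vecMulVec c d) i := by
    intro i
    rcases eq_or_ne i j with rfl | hij
    · ext; simp [vecMulVec_apply]
    · ext; simp [vecMulVec_apply, hij]
  rw [mul_eq_sum_vecMulVec, mul_eq_sum_vecMulVec, Finset.sum_congr rfl fun i _ => hterm i,
    Finset.sum_update_of_mem hj, Finset.sum_eq_sum_sdiff_singleton_add hj]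
  abel

end Matrix

section PartialProducts

variable {R ι κ : Type*} [NonUnitalNonAssocSemiring R] [Fintype ι] {n : ℕ}

def mulColsBelow (A : Matrix ι ι R) (C : Matrix ι (Fin n) R) (m : ℕ) : Matrix ι (Fin n) R :=
  of fun r j => if (j : ℕ) < m then (A * C) r j else C r j

def mulRowsBelow (D : Matrix (Fin n) ι R) (A : Matrix ι ι R) (m : ℕ) : Matrix (Fin n) ι R :=
  of fun j r => if (j : ℕ) < m then (D * A) j r else D j r

def sumVecMulVecBelow (C : Matrix κ (Fin n) R) (D : Matrix (Fin n) κ R) (m : ℕ) :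
    Matrix κ κ R :=
  ∑ i ∈ Finset.univ.filter (fun i : Fin n => (i : ℕ) < m), vecMulVec (Cᵀ i) (D i)

@[simp]
theorem mulColsBelow_zero (A : Matrix ι ι R) (C : Matrix ι (Fin n) R) :
    mulColsBelow A C 0 = C := by
  ext; simp [mulColsBelow]

@[simp]
theorem mulRowsBelow_zero (D : Matrix (Fin n) ι R) (A : Matrix ι ι R) :
    mulRowsBelow D A 0 = D := by
  ext; simp [mulRowsBelow]

@[simp]
theorem sumVecMulVecBelow_zero (C : Matrix κ (Fin n) R) (D : Matrix (Fin n) κ R) :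
    sumVecMulVecBelow C D 0 = 0 := by
  simp [sumVecMulVecBelow]

theorem mulColsBelow_self (A : Matrix ι ι R) (C : Matrix ι (Fin n) R) :
    mulColsBelow A C n = A * C := by
  ext; simp [mulColsBelow]

theorem mulRowsBelow_self (D : Matrix (Fin n) ι R) (A : Matrix ι ι R) :
    mulRowsBelow D A n = D * A := by
  ext; simp [mulRowsBelow]

theorem sumVecMulVecBelow_self (C : Matrix κ (Fin n) R) (D : Matrix (Fin n) κ R) :
    sumVecMulVecBelow C D n = C * D := by
  simp [sumVecMulVecBelow, mul_eq_sum_vecMulVec]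

theorem col_mulColsBelow (A : Matrix ι ι R) (C : Matrix ι (Fin n) R) {m : ℕ} (hm : m < n) :
    (mulColsBelow A C m)ᵀ ⟨m, hm⟩ = Cᵀ ⟨m, hm⟩ := by
  ext; simp [mulColsBelow]

theorem row_mulRowsBelow (D : Matrix (Fin n) ι R) (A : Matrix ι ι R) {m : ℕ} (hm : m < n) :
    mulRowsBelow D A m ⟨m, hm⟩ = D ⟨m, hm⟩ := by
  ext; simp [mulRowsBelow]

theorem updateCol_mulColsBelow (A : Matrix ι ι R) (C : Matrix ι (Fin n) R) {m : ℕ}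
    (hm : m < n) :
    (mulColsBelow A C m).updateCol ⟨m, hm⟩ (A *ᵥ Cᵀ ⟨m, hm⟩) = mulColsBelow A C (m + 1) := by
  ext r ⟨j, hj⟩
  simp only [mulColsBelow, updateCol_apply, of_apply, Fin.mk.injEq]
  rcases lt_trichotomy j m with h | rfl | h
  · rw [if_neg h.ne, if_pos h, if_pos (by omega)]
  · rw [if_pos rfl, if_pos (by omega)]
    rfl
  · rw [if_neg h.ne', if_neg (by omega), if_neg (by omega)]

theorem updateRow_mulRowsBelow (D : Matrix (Fin n) ι R) (A : Matrix ι ι R) {m : ℕ}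
    (hm : m < n) :
    (mulRowsBelow D A m).updateRow ⟨m, hm⟩ (D ⟨m, hm⟩ ᵥ* A) = mulRowsBelow D A (m + 1) := by
  ext ⟨j, hj⟩ r
  simp only [mulRowsBelow, updateRow_apply, of_apply, Fin.mk.injEq]
  rcases lt_trichotomy j m with h | rfl | h
  · rw [if_neg h.ne, if_pos h, if_pos (by omega)]
  · rw [if_pos rfl, if_pos (by omega)]
    rfl
  · rw [if_neg h.ne', if_neg (by omega), if_neg (by omega)]

theorem sumVecMulVecBelow_succ (C : Matrix κ (Fin n) R) (D : Matrix (Fin n) κ R) {m : ℕ}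
    (hm : m < n) :
    sumVecMulVecBelow C D (m + 1) =
      sumVecMulVecBelow C D m + vecMulVec (Cᵀ ⟨m, hm⟩) (D ⟨m, hm⟩) := by
  have hfilter : Finset.univ.filter (fun i : Fin n => (i : ℕ) < m + 1) =
      insert ⟨m, hm⟩ (Finset.univ.filter fun i : Fin n => (i : ℕ) < m) := by
    ext i
    simp [Fin.ext_iff]
    omega
  rw [sumVecMulVecBelow, hfilter, Finset.sum_insert (by simp), add_comm]
  rfl

end PartialProducts

section Hecke

open Fin.NatCast

variable {k n : ℕ} [NeZero n]

theorem heckeADHM_eq (A B : Matrix (Fin k) (Fin k) ℂ)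
    (C : Matrix (Fin k) (Fin n) ℂ) (D : Matrix (Fin n) (Fin k) ℂ) :
    heckeADHM k n (A, B, C, D) =
      (A, B - vecMulVec (Cᵀ 0) (D 0) * A⁻¹,
        (C.updateCol 0 (A *ᵥ Cᵀ 0)).submatrix id (Equiv.addRight 1),
        (D.updateRow 0 (D 0 ᵥ* A⁻¹)).submatrix (Equiv.addRight 1) id) := by
  have hshift : ∀ s : Fin n, ∀ h : (s : ℕ) + 1 < n, s + 1 = ⟨s + 1, h⟩ := fun s h =>
    Fin.ext (by rw [Fin.val_add_one_of_lt' h])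
  have hwrap : ∀ s : Fin n, ¬ (s : ℕ) + 1 < n → s + 1 = 0 := fun s h =>
    Fin.ext (by
      rw [Fin.val_add, Fin.val_zero, Fin.val_one', Nat.add_mod_mod, show (s : ℕ) + 1 = n by omega,
        Nat.mod_self])
  simp only [heckeADHM, Prod.mk.injEq, true_and]
  refine ⟨rfl, ?_, ?_⟩
  · ext r s
    by_cases h : (s : ℕ) + 1 < n
    · simp [h, hshift s h]
    · simp [h, hwrap s h]
      rfl
  · ext s r
    by_cases h : (s : ℕ) + 1 < n
    · simp [h, hshift s h]
    · simp [h, hwrap s h]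

def IsADHM (X : ADHMData k n) : Prop :=
  X.1 * X.2.1 - X.2.1 * X.1 + X.2.2.1 * X.2.2.2 = 0

theorem IsADHM.heckeADHM {A B : Matrix (Fin k) (Fin k) ℂ} {C : Matrix (Fin k) (Fin n) ℂ}
    {D : Matrix (Fin n) (Fin k) ℂ} (h : IsADHM (A, B, C, D)) (hA : IsUnit A.det) :
    IsADHM (heckeADHM k n (A, B, C, D)) := by
  rw [heckeADHM_eq]
  unfold IsADHM at h ⊢
  dsimp only at h ⊢
  rw [submatrix_mul_equiv, submatrix_id_id, updateCol_mul_updateRow, ← mul_vecMulVec,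
    ← vecMulVec_mul]
  set P := vecMulVec (Cᵀ 0) (D 0)
  calc A * (B - P * A⁻¹) - (B - P * A⁻¹) * A + (C * D - P + A * (P * A⁻¹))
      = (A * B - B * A + C * D) + P * (A⁻¹ * A) - P := by noncomm_ring
    _ = 0 := by rw [h, nonsing_inv_mul A hA, mul_one, zero_add, sub_self]

noncomputable def heckeState (A B : Matrix (Fin k) (Fin k) ℂ) (C : Matrix (Fin k) (Fin n) ℂ)
    (D : Matrix (Fin n) (Fin k) ℂ) (m : ℕ) : ADHMData k n :=
  (A, B - sumVecMulVecBelow C D m * A⁻¹,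
    (mulColsBelow A C m).submatrix id (Equiv.addRight (m : Fin n)),
    (mulRowsBelow D A⁻¹ m).submatrix (Equiv.addRight (m : Fin n)) id)

variable (A B : Matrix (Fin k) (Fin k) ℂ) (C : Matrix (Fin k) (Fin n) ℂ)
  (D : Matrix (Fin n) (Fin k) ℂ)

theorem heckeState_zero : heckeState A B C D 0 = (A, B, C, D) := by
  simp [heckeState]

theorem heckeState_self :
    heckeState A B C D n = (A, B - C * D * A⁻¹, A * C, D * A⁻¹) := by
  simp [heckeState, sumVecMulVecBelow_self, mulColsBelow_self, mulRowsBelow_self]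

theorem heckeADHM_heckeState {m : ℕ} (hm : m < n) :
    heckeADHM k n (heckeState A B C D m) = heckeState A B C D (m + 1) := by
  have hfirst : Equiv.addRight (m : Fin n) 0 = ⟨m, hm⟩ := by
    ext; simp [Nat.mod_eq_of_lt hm]
  have hrotate : (Equiv.addRight (m : Fin n) : Fin n → Fin n) ∘ Equiv.addRight 1 =
      Equiv.addRight ((m + 1 : ℕ) : Fin n) := by
    funext s; simp [add_assoc, add_comm (1 : Fin n)]
  have hcol : ((mulColsBelow A C m).submatrix id (Equiv.addRight (m : Fin n)))ᵀ 0 =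
      Cᵀ ⟨m, hm⟩ := by
    rw [← col_mulColsBelow A C hm, ← hfirst]
    rfl
  have hrow : (mulRowsBelow D A⁻¹ m).submatrix (Equiv.addRight (m : Fin n)) id 0 =
      D ⟨m, hm⟩ := by
    rw [← row_mulRowsBelow D A⁻¹ hm, ← hfirst]
    rfl
  rw [heckeState, heckeState, heckeADHM_eq, hcol, hrow, updateCol_submatrix_id, updateRow_submatrix_id,
    hfirst, updateCol_mulColsBelow, updateRow_mulRowsBelow, submatrix_submatrix,
    submatrix_submatrix, Function.comp_id, hrotate, sumVecMulVecBelow_succ C D hm, add_mul, sub_sub]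

theorem iterate_heckeADHM {m : ℕ} (hm : m ≤ n) :
    (heckeADHM k n)^[m] (A, B, C, D) = heckeState A B C D m := by
  induction m with
  | zero => exact (heckeState_zero A B C D).symm
  | succ m ih =>
    rw [Function.iterate_succ_apply', ih (by omega), heckeADHM_heckeState A B C D (by omega)]

end Hecke

/-- In the ADHM description of rank-`n`, charge-`k` instanton bundles with
`A` invertible: if `(A,B,C,D)` satisfies the ADHM constraint `[A,B] + CD = 0` and `A` is
invertible, then the Hecke transform `ℋ(A,B,C,D)` again satisfies the ADHM constraint, and
`ℋⁿ(A,B,C,D) = (A, ABA⁻¹, AC, DA⁻¹)`, the `GL(k)`-gauge transform of `(A,B,C,D)` by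
`g = A`. -/
theorem stmt19 (k n : ℕ) [NeZero n]
    (A B : Matrix (Fin k) (Fin k) ℂ) (C : Matrix (Fin k) (Fin n) ℂ)
    (D : Matrix (Fin n) (Fin k) ℂ)
    (hADHM : A * B - B * A + C * D = 0)
    (hA : IsUnit A.det) :
    (let Y := heckeADHM k n (A, B, C, D)
     Y.1 * Y.2.1 - Y.2.1 * Y.1 + Y.2.2.1 * Y.2.2.2 = 0) ∧
    (heckeADHM k n)^[n] (A, B, C, D) = (A, A * B * A⁻¹, A * C, D * A⁻¹) := by
  refine ⟨IsADHM.heckeADHM hADHM hA, ?_⟩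
  have hB : B - C * D * A⁻¹ = A * B * A⁻¹ :=
    calc B - C * D * A⁻¹
        = A * B * A⁻¹ - (A * B - B * A + C * D) * A⁻¹ - B * (A * A⁻¹) + B := by noncomm_ring
      _ = A * B * A⁻¹ := by
        rw [hADHM, mul_nonsing_inv A hA, zero_mul, sub_zero, mul_one, sub_add_cancel]
  rw [iterate_heckeADHM A B C D le_rfl, heckeState_self, hB]
end
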